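/- arXiv:1506.04054 — 3 statements merged into one kernel-verified Lean document; each statement's English description precedes it below -/
import Mathlib

section
/- A simple graph G has a unique Sachs subgraph if and only if G can be reduced to a (possibly empty) family of pairwise independent odd cycles by repeatedly deleting pendant edges together with both of their end-vertices. -/
open scoped Classical

/-- Degree of a vertex in a simple graph (as a cardinality, avoiding decidability). -/
noncomputable def ndeg {V : Type*} (H : SimpleGraph V) (v : V) : ℕ :=
  Nat.card {w // H.Adj v w}

/-- `H` is a Sachs subgraph of the simple graph `G`: a spanning subgraph all of whose
components are `K₂`'s or cycles. -/
def IsSachsSubgraph {n : ℕ} (G H : SimpleGraph (Fin n)) : Prop :=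
  H ≤ G ∧ (∀ v, ndeg H v = 1 ∨ ndeg H v = 2) ∧
    ∀ u v, H.Adj u v → ¬(ndeg H u = 1 ∧ ndeg H v = 2)

/-- `PendantReduces G U W`: starting from the induced subgraph of `G` on the vertex set
`U`, one can reach the vertex set `W` by repeatedly deleting a pendant edge together
with both of its end-vertices. -/
inductive PendantReduces {n : ℕ} (G : SimpleGraph (Fin n)) :
    Finset (Fin n) → Finset (Fin n) → Prop
  | refl (U : Finset (Fin n)) : PendantReduces G U U
  | step {U W : Finset (Fin n)} (u v : Fin n)
      (hu : u ∈ (↑U : Set (Fin n))) (hv : v ∈ U) (huv : G.Adj u v)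
      (hdeg : ndeg (G.induce (↑U : Set (Fin n))) ⟨u, hu⟩ = 1)
      (h : PendantReduces G (U \ {u, v}) W) : PendantReduces G U W

/-- The induced subgraph of `G` on `U` is a (possibly empty) family of pairwise
independent odd cycles: every vertex of `U` has induced degree `2` (so no edge of `G`
joins two different cycles) and every connected component has an odd number of
vertices. -/
def IsIndependentOddCycles {n : ℕ} (G : SimpleGraph (Fin n)) (U : Finset (Fin n)) : Prop :=
  (∀ v : (↑U : Set (Fin n)), ndeg (G.induce (↑U : Set (Fin n))) v = 2) ∧
  ∀ c : (G.induce (↑U : Set (Fin n))).ConnectedComponent, Odd (Nat.card c.supp)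

/-!
Pendant edges are forced: if `u` has the single neighbour `v` in `G[U]`, every Sachs subgraph of
`G[U]` contains the component `uv`, so deleting `u` and `v` is a bijection between Sachs
subgraphs. This reduces both directions to graphs of minimum degree at least `2`.

Sachs subgraphs are the graphs of the permutations `σ` with `v ~ σ v` for all `v` (one direction
by Hall's theorem). If `G` has minimum degree `2` and a unique Sachs subgraph, rerouting `σ`
along alternating cycles shows that every edge of `G` joins some `v` to `σ v`, and reversing `σ`
on a `σ²`-orbit shows that every cycle of `σ` is odd. Conversely, in a disjoint union of odd
cycles the `K₂` components of a Sachs subgraph would fill whole components and pair off their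
odd number of vertices.
-/

open Function Set Equiv SimpleGraph

section Degree

variable {V : Type*} {H H' : SimpleGraph V} {v : V}

lemma ndeg_eq_ncard (H : SimpleGraph V) (v : V) : ndeg H v = (H.neighborSet v).ncard :=
  (Nat.card_coe_set_eq _).symm

lemma ndeg_eq_one_iff : ndeg H v = 1 ↔ ∃ w, H.neighborSet v = {w} := by
  rw [ndeg_eq_ncard, ncard_eq_one]

lemma ndeg_congr (h : ∀ w, H.Adj v w ↔ H'.Adj v w) : ndeg H v = ndeg H' v := by
  simp only [ndeg, h]

lemma ndeg_mono [Finite V] (h : H ≤ H') (v : V) : ndeg H v ≤ ndeg H' v := by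
  rw [ndeg_eq_ncard, ndeg_eq_ncard]
  exact ncard_le_ncard fun _ hw ↦ h hw

lemma ndeg_le_one_of_subset {a : V} (h : H.neighborSet v ⊆ {a}) : ndeg H v ≤ 1 := by
  rw [ndeg_eq_ncard, ← ncard_singleton a]
  exact ncard_le_ncard h

lemma ndeg_map {W : Type*} (f : V ↪ W) (H : SimpleGraph V) (v : V) :
    ndeg (H.map f) (f v) = ndeg H v := by
  rw [ndeg_eq_ncard, ndeg_eq_ncard, neighborSet_map, ncard_image_of_injective _ f.injective]

lemma ndeg_induce_of_forall_adj_mem {s : Set V} (hv : v ∈ s) (h : ∀ w, H.Adj v w → w ∈ s) :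
    ndeg (H.induce s) ⟨v, hv⟩ = ndeg H v := by
  have himage : Subtype.val '' (H.induce s).neighborSet ⟨v, hv⟩ = H.neighborSet v := by
    ext w
    exact ⟨fun ⟨w', hw', hw⟩ ↦ hw ▸ hw', fun hw ↦ ⟨⟨w, h w hw⟩, hw, rfl⟩⟩
  rw [ndeg_eq_ncard, ndeg_eq_ncard, ← himage, ncard_image_of_injective _ Subtype.val_injective]

lemma even_card_of_forall_ndeg_eq_one [Finite V] (h : ∀ v, ndeg H v = 1) :
    Even (Nat.card V) := by
  classical
  have := Fintype.ofFinite V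
  have hdeg (v : V) : H.degree v = 1 := by
    rw [← card_neighborSet_eq_degree, ← h v, ndeg, Nat.card_eq_fintype_card]
    rfl
  simpa [hdeg, Nat.card_eq_fintype_card] using H.even_card_odd_degree_vertices

end Degree

lemma existsUnique_congr_of_invOn {α β : Type*} {p : α → Prop} {q : β → Prop} (f : α → β)
    (g : β → α) (hf : ∀ a, p a → q (f a)) (hg : ∀ b, q b → p (g b))
    (hgf : ∀ a, p a → g (f a) = a) (hfg : ∀ b, q b → f (g b) = b) :
    (∃! a, p a) ↔ ∃! b, q b := by
  constructor
  · rintro ⟨a, ha, huniq⟩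
    exact ⟨f a, hf a ha, fun b hb ↦ by rw [← hfg b hb, huniq _ (hg b hb)]⟩
  · rintro ⟨b, hb, huniq⟩
    exact ⟨g b, hg b hb, fun a ha ↦ by rw [← hgf a ha, huniq _ (hf a ha)]⟩

lemma Function.mem_of_periodicPts_subset {α : Type*} [Finite α] {f : α → α} {s : Set α}
    (hs : ∀ x, f x ∈ s → x ∈ s) (hP : periodicPts f ⊆ s) (x : α) : x ∈ s := by
  obtain ⟨i, j, hij, heq⟩ := Finite.exists_ne_map_eq_of_infinite fun k : ℕ ↦ f^[k] x
  wlog hlt : i < j generalizing i j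
  · exact this j i hij.symm heq.symm (by omega)
  have hper : f^[i] x ∈ periodicPts f :=
    mk_mem_periodicPts (by omega : 0 < j - i) <| by
      rw [IsPeriodicPt, IsFixedPt, ← iterate_add_apply, Nat.sub_add_cancel hlt.le, heq]
  have hback (k : ℕ) (hk : f^[k] x ∈ s) : x ∈ s := by
    induction k with
    | zero => exact hk
    | succ k ih => exact ih (hs _ (by rwa [← iterate_succ_apply' f]))
  exact hback i (hP hper)

lemma Equiv.Perm.card_sameCycle {V : Type*} [Finite V] (σ : Perm V) (a : V) :
    Nat.card {b | σ.SameCycle a b} = minimalPeriod σ a := by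
  classical
  have := Fintype.ofFinite V
  have horbit : {b | σ.SameCycle a b} = MulAction.orbit (Subgroup.zpowers σ) a := by
    ext b
    simp only [mem_ofPred_eq, MulAction.mem_orbit_iff, Subgroup.exists_zpowers, Perm.SameCycle]
    rfl
  rw [horbit, Nat.card_eq_fintype_card, ← MulAction.minimalPeriod_eq_card]
  rfl

lemma Equiv.Perm.odd_minimalPeriod_of_sameCycle_sq {V : Type*} {σ : Perm V} {z : V}
    (h : (σ ^ 2).SameCycle z (σ z)) : Odd (minimalPeriod σ z) := by
  obtain ⟨k, hk⟩ := h
  have hper : σ ^ (2 * k - 1) • z = z := by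
    rw [Perm.smul_def, show 2 * k - 1 = -1 + 2 * k by ring, zpow_add, zpow_mul, Perm.mul_apply]
    simp [hk]
  rw [MulAction.zpow_smul_eq_iff_minimalPeriod_dvd] at hper
  rcases Nat.even_or_odd (minimalPeriod σ z) with he | ho
  · have := dvd_trans (Int.natCast_dvd_natCast.2 (even_iff_two_dvd.1 he)) hper
    omega
  · exact ho

lemma reachable_iff_sameCycle {V : Type*} [Finite V] {H : SimpleGraph V} {σ : Perm V}
    (hadj : ∀ a b, H.Adj a b ↔ b = σ a ∨ b = σ⁻¹ a) {a b : V} :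
    H.Reachable a b ↔ σ.SameCycle a b := by
  constructor
  · rw [reachable_iff_reflTransGen]
    intro h
    induction h with
    | refl => exact .rfl
    | tail _ hbc ih =>
      rcases (hadj _ _).1 hbc with rfl | rfl
      exacts [ih.apply_right, ih.symm_apply_right]
  · intro h
    obtain ⟨k, -, rfl⟩ := h.exists_nat_pow_eq
    clear h
    induction k with
    | zero => rfl
    | succ k ih =>
      rw [pow_succ', Perm.mul_apply]
      exact ih.trans ((hadj _ _).2 (.inl rfl)).reachable

section SachsOn

variable {V : Type*}

/-- A Sachs subgraph of `G[U]`, viewed as a graph on the ambient vertex type. -/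
structure IsSachsOn (G : SimpleGraph V) (U : Set V) (S : SimpleGraph V) : Prop where
  le : S ≤ G
  support_subset : S.support ⊆ U
  ndeg_eq_one_or_two : ∀ v ∈ U, ndeg S v = 1 ∨ ndeg S v = 2
  not_ndeg_one_two : ∀ ⦃v w⦄, S.Adj v w → ¬(ndeg S v = 1 ∧ ndeg S w = 2)

variable {G S : SimpleGraph V} {U : Set V}

lemma isSachsSubgraph_iff_isSachsOn_univ {n : ℕ} {G S : SimpleGraph (Fin n)} :
    IsSachsSubgraph G S ↔ IsSachsOn G univ S :=
  ⟨fun ⟨hle, hdeg, hmix⟩ ↦ ⟨hle, subset_univ _, fun v _ ↦ hdeg v, hmix⟩,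
    fun h ↦ ⟨h.le, fun v ↦ h.ndeg_eq_one_or_two v trivial, h.not_ndeg_one_two⟩⟩

lemma IsSachsOn.ndeg_eq_of_adj (hS : IsSachsOn G U S) {v w : V} (h : S.Adj v w) :
    ndeg S v = ndeg S w := by
  have hv := hS.ndeg_eq_one_or_two v (hS.support_subset ⟨w, h⟩)
  have hw := hS.ndeg_eq_one_or_two w (hS.support_subset ⟨v, h.symm⟩)
  have := hS.not_ndeg_one_two h
  have := hS.not_ndeg_one_two h.symm
  omega

lemma IsSachsOn.ndeg_pos (hS : IsSachsOn G U S) {v : V} (hv : v ∈ U) : 0 < ndeg S v := by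
  rcases hS.ndeg_eq_one_or_two v hv with h | h <;> omega

lemma isSachsOn_spanningCoe_iff {T : SimpleGraph U} :
    IsSachsOn G U T.spanningCoe ↔ IsSachsOn (G.induce U) univ T := by
  have hdeg (v : U) : ndeg T.spanningCoe v = ndeg T v := ndeg_map _ T v
  constructor
  · intro h
    refine ⟨(map_le_iff_le_comap _ _ _).1 h.le, subset_univ _, fun v _ ↦ ?_,
      fun v w hvw ↦ ?_⟩
    · rw [← hdeg]; exact h.ndeg_eq_one_or_two v v.2
    · rw [← hdeg, ← hdeg]; exact h.not_ndeg_one_two (map_adj_apply.2 hvw)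
  · intro h
    refine ⟨(map_le_iff_le_comap _ _ _).2 h.le, ?_, fun v hv ↦ ?_, ?_⟩
    · rw [support_spanningCoe]
      rintro _ ⟨v, -, rfl⟩
      exact v.2
    · rw [show v = ((⟨v, hv⟩ : U) : V) from rfl, hdeg]; exact h.ndeg_eq_one_or_two _ trivial
    · rintro _ _ ⟨-, v, w, hvw, rfl, rfl⟩
      simp only [Embedding.coe_subtype, hdeg]
      exact h.not_ndeg_one_two hvw

lemma existsUnique_isSachsOn_iff_induce :
    (∃! S, IsSachsOn G U S) ↔ ∃! T, IsSachsOn (G.induce U) univ T := by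
  have hS (S : SimpleGraph V) (h : IsSachsOn G U S) : (S.induce U).spanningCoe = S :=
    (spanningCoe_induce_eq_self _ _).2 h.support_subset
  refine existsUnique_congr_of_invOn (induce U) spanningCoe
    (fun S h ↦ ?_) (fun T h ↦ isSachsOn_spanningCoe_iff.2 h) hS
    (fun T _ ↦ induce_spanningCoe)
  rw [← isSachsOn_spanningCoe_iff, hS S h]
  exact h

end SachsOn

section AdjacencyPermutation

variable {V : Type*} {H S : SimpleGraph V} {σ : Perm V}

def permGraph (σ : Perm V) : SimpleGraph V := fromRel fun a b ↦ σ a = b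

lemma permGraph_adj {a b : V} : (permGraph σ).Adj a b ↔ a ≠ b ∧ (σ a = b ∨ σ b = a) :=
  fromRel_adj _ _ _

lemma permGraph_adj_apply (hσ : ∀ v, H.Adj v (σ v)) (a : V) : (permGraph σ).Adj a (σ a) :=
  permGraph_adj.2 ⟨(hσ a).ne, .inl rfl⟩

lemma neighborSet_permGraph (hσ : ∀ v, H.Adj v (σ v)) (a : V) :
    (permGraph σ).neighborSet a = {σ a, σ⁻¹ a} := by
  ext b
  simp only [mem_neighborSet, permGraph_adj, mem_insert_iff, mem_singleton_iff,
    Perm.eq_inv_iff_eq]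
  refine ⟨fun h ↦ h.2.imp Eq.symm id, fun h ↦ ⟨?_, h.imp Eq.symm id⟩⟩
  rintro rfl
  rcases h with h | h
  · exact (hσ a).ne h
  · exact (hσ a).ne h.symm

lemma isSachsOn_permGraph (hσ : ∀ v, H.Adj v (σ v)) : IsSachsOn H univ (permGraph σ) := by
  have hdeg (a : V) : ndeg (permGraph σ) a = if σ (σ a) = a then 1 else 2 := by
    rw [ndeg_eq_ncard, neighborSet_permGraph hσ, ← Perm.eq_inv_iff_eq]
    split_ifs with h
    · rw [h, pair_eq_singleton, ncard_singleton]
    · exact ncard_pair h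
  refine ⟨fun a b h ↦ ?_, subset_univ _, fun v _ ↦ ?_, fun a b h ↦ ?_⟩
  · rcases (permGraph_adj.1 h).2 with rfl | rfl
    exacts [hσ a, (hσ b).symm]
  · rw [hdeg]; split_ifs <;> simp
  · rw [hdeg, hdeg]
    rcases (permGraph_adj.1 h).2 with rfl | rfl <;>
      simp only [σ.apply_eq_iff_eq] <;> split_ifs <;> simp

/-- Hall's condition holds in every graph whose adjacent vertices have equal positive degrees:
each vertex spreads total weight `1` evenly over its neighbours, and then every vertex receives
total weight at most `1`. -/
lemma exists_perm_adj_of_ndeg_eq [Finite V] (hpos : ∀ v, 0 < ndeg S v)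
    (heq : ∀ v w, S.Adj v w → ndeg S v = ndeg S w) : ∃ σ : Perm V, ∀ v, S.Adj v (σ v) := by
  classical
  have := Fintype.ofFinite V
  let t (v : V) : Finset V := {w | S.Adj v w}
  have hcard (v : V) : (t v).card = ndeg S v := by
    rw [ndeg, Nat.card_eq_fintype_card, Fintype.card_subtype]
  have hall (A : Finset V) : A.card ≤ (A.biUnion t).card := by
    have hunit (v : V) : ∑ _w ∈ t v, (1 / ndeg S v : ℚ) = 1 := by
      have := hpos v
      rw [Finset.sum_const, hcard, nsmul_eq_mul]
      field_simp
    have key : (A.card : ℚ) ≤ (A.biUnion t).card := calc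
      (A.card : ℚ) = ∑ a ∈ A, ∑ w ∈ t a, (1 / ndeg S a : ℚ) := by
        rw [Finset.sum_congr rfl fun a _ ↦ hunit a]; simp
      _ = ∑ a ∈ A, ∑ w ∈ t a, (1 / ndeg S w : ℚ) :=
        Finset.sum_congr rfl fun a _ ↦ Finset.sum_congr rfl fun w hw ↦ by
          rw [heq a w (by simpa [t] using hw)]
      _ = ∑ w ∈ A.biUnion t, ∑ a ∈ (t w).filter (· ∈ A), (1 / ndeg S w : ℚ) :=
        Finset.sum_comm' fun a w ↦ by
          simp only [t, Finset.mem_biUnion, Finset.mem_filter, Finset.mem_univ, true_and]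
          exact ⟨fun h ↦ ⟨⟨h.2.symm, h.1⟩, a, h⟩, fun h ↦ ⟨h.1.2, h.1.1.symm⟩⟩
      _ ≤ ∑ w ∈ A.biUnion t, ∑ a ∈ t w, (1 / ndeg S w : ℚ) :=
        Finset.sum_le_sum fun w _ ↦
          Finset.sum_le_sum_of_subset_of_nonneg (Finset.filter_subset _ _)
            fun _ _ _ ↦ by positivity
      _ = (A.biUnion t).card := by
        rw [Finset.sum_congr rfl fun w _ ↦ hunit w]; simp
    exact_mod_cast key
  obtain ⟨f, hf, hft⟩ := (Finset.all_card_le_biUnion_card_iff_exists_injective t).1 hall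
  exact ⟨Equiv.ofBijective f hf.bijective_of_finite, fun v ↦ by simpa [t] using hft v⟩

lemma IsSachsOn.exists_perm_adj [Finite V] (hS : IsSachsOn H univ S) :
    ∃ σ : Perm V, ∀ v, S.Adj v (σ v) :=
  exists_perm_adj_of_ndeg_eq (fun _ ↦ hS.ndeg_pos trivial) fun _ _ ↦ hS.ndeg_eq_of_adj

lemma exists_perm_eqOn_of_bijOn (σ : Perm V) {g : V → V} {Z : Set V} (hg : BijOn g Z Z) :
    ∃ τ : Perm V, (∀ v ∈ Z, τ v = σ (g v)) ∧ ∀ v, v ∉ Z → τ v = σ v := by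
  classical
  refine ⟨σ * Perm.ofSubtype (hg.equiv g), fun v hv ↦ ?_, fun v hv ↦ ?_⟩
  · rw [Perm.mul_apply, Perm.ofSubtype_apply_of_mem _ hv]
    rfl
  · rw [Perm.mul_apply, Perm.ofSubtype_apply_of_not_mem _ hv]

end AdjacencyPermutation

section UniqueSachs

variable {V : Type*} {H : SimpleGraph V} {σ : Perm V}

/-- Reversing `σ` on the `σ²`-orbit of `z` gives an adjacency permutation that loses the edge
`z (σ z)` unless that orbit already contains `σ z`. -/
lemma sameCycle_sq_apply_of_permGraph_eq (hσ : ∀ v, H.Adj v (σ v))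
    (huniq : ∀ τ : Perm V, (∀ v, H.Adj v (τ v)) → permGraph τ = permGraph σ)
    {z : V} (hz : σ (σ z) ≠ z) : (σ ^ 2).SameCycle z (σ z) := by
  by_contra hzσ
  let O := {v | (σ ^ 2).SameCycle z v}
  have hO : BijOn ⇑(σ ^ 2)⁻¹ O O := (σ ^ 2)⁻¹.bijOn fun _ ↦ Perm.sameCycle_symm_apply_right
  obtain ⟨τ, hτO, hτO'⟩ := exists_perm_eqOn_of_bijOn σ hO
  have hτO_inv (v : V) (hv : v ∈ O) : τ v = σ⁻¹ v := by
    rw [hτO v hv]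
    simp [pow_two]
  have hτ (v : V) : H.Adj v (τ v) := by
    by_cases hv : v ∈ O
    · rw [hτO_inv v hv]; simpa using (hσ (σ⁻¹ v)).symm
    · rw [hτO' v hv]; exact hσ v
  rcases (permGraph_adj.1 (huniq τ hτ ▸ permGraph_adj_apply hσ z)).2 with h | h
  · rw [hτO_inv z .rfl, Perm.inv_eq_iff_eq] at h
    exact hz h.symm
  · rw [hτO' _ hzσ] at h
    exact hz h

/-- Closure under `σ` comes from `sameCycle_sq_apply_of_permGraph_eq`: the `σ²`-orbit of `v`
contains `σ v`. -/
lemma mem_of_adj_of_forall_adj_eq [Finite V] (hdeg : ∀ v, 2 ≤ ndeg H v)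
    (hσ : ∀ v, H.Adj v (σ v))
    (huniq : ∀ τ : Perm V, (∀ v, H.Adj v (τ v)) → permGraph τ = permGraph σ) {P : Set V}
    (hnbr : ∀ v ∈ P, ∀ w, H.Adj v w → w = σ v ∨ w = σ⁻¹ v) (hP : ∀ v ∈ P, σ (σ v) ∈ P)
    {v w : V} (hv : v ∈ P) (hvw : H.Adj v w) : w ∈ P := by
  have hcycle (u : V) (hu : (σ ^ 2).SameCycle v u) : u ∈ P := by
    obtain ⟨k, -, rfl⟩ := hu.exists_nat_pow_eq
    clear hu
    induction k with
    | zero => exact hv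
    | succ k ih =>
      rw [pow_succ' (σ ^ 2) k, Perm.mul_apply]
      simpa only [sq, Perm.mul_apply] using hP _ ih
  have hσσ : σ (σ v) ≠ v := by
    intro h
    have hsub : H.neighborSet v ⊆ {σ v} := fun w hw ↦ by
      rcases hnbr v hv w hw with rfl | rfl
      · rfl
      · rw [mem_singleton_iff, Perm.inv_eq_iff_eq, h]
    have := hdeg v
    have := ndeg_le_one_of_subset hsub
    omega
  have hsc := sameCycle_sq_apply_of_permGraph_eq hσ huniq hσσ
  rcases hnbr v hv w hvw with rfl | rfl
  · exact hcycle _ hsc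
  · refine hcycle _ (hsc.trans (Perm.SameCycle.symm ⟨1, ?_⟩))
    simp [pow_two]

/-- Send each vertex `v` to a neighbour `n v ∉ {σ v, σ⁻¹ v}` if there is one (to `σ⁻¹ v`
otherwise) and put `g = σ⁻¹ ∘ n`. Rerouting `σ` to `n` on the periodic points of `g` shows that
no periodic point has such a neighbour; so they form a set closed under adjacency and under
`g`-preimages, which is everything. -/
lemma adj_iff_of_permGraph_eq [Finite V] (hdeg : ∀ v, 2 ≤ ndeg H v) (hσ : ∀ v, H.Adj v (σ v))
    (huniq : ∀ τ : Perm V, (∀ v, H.Adj v (τ v)) → permGraph τ = permGraph σ) {a b : V} :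
    H.Adj a b ↔ b = σ a ∨ b = σ⁻¹ a := by
  let Tight (v : V) : Prop := ∀ w, H.Adj v w → w = σ v ∨ w = σ⁻¹ v
  have hchoice (v : V) : ∃ w, H.Adj v w ∧ (w = σ v ∨ w = σ⁻¹ v → Tight v ∧ w = σ⁻¹ v) := by
    by_cases hv : Tight v
    · exact ⟨σ⁻¹ v, by simpa using (hσ (σ⁻¹ v)).symm, fun _ ↦ ⟨hv, rfl⟩⟩
    · simp only [Tight, not_forall] at hv
      obtain ⟨w, hvw, hw⟩ := hv
      exact ⟨w, hvw, fun h ↦ (hw h).elim⟩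
  choose n hn using hchoice
  let g (v : V) : V := σ⁻¹ (n v)
  let P := periodicPts g
  obtain ⟨τ, hτP, hτP'⟩ := exists_perm_eqOn_of_bijOn σ (bijOn_periodicPts g)
  have hτP_n (v : V) (hv : v ∈ P) : τ v = n v := by simp [hτP v hv, g]
  have hτ (v : V) : H.Adj v (τ v) := by
    by_cases hv : v ∈ P
    · rw [hτP_n v hv]; exact (hn v).1
    · rw [hτP' v hv]; exact hσ v
  have hbad (v : V) (hv : v ∈ P) : Tight v ∧ n v = σ⁻¹ v := by
    refine (hn v).2 ?_
    have := (permGraph_adj.1 (huniq τ hτ ▸ permGraph_adj_apply hτ v)).2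
    rw [hτP_n v hv] at this
    exact this.imp Eq.symm Perm.eq_inv_iff_eq.2
  have hsq (v : V) (hv : v ∈ P) : σ (σ v) ∈ P := by
    obtain ⟨w, hw, hwv⟩ := (bijOn_periodicPts g).surjOn hv
    simp only [g, (hbad w hw).2, Perm.inv_eq_iff_eq] at hwv
    rwa [← hwv]
  have hclosed {v w : V} : v ∈ P → H.Adj v w → w ∈ P :=
    mem_of_adj_of_forall_adj_eq hdeg hσ huniq (fun v hv ↦ (hbad v hv).1) hsq
  have hpre (v : V) (hv : g v ∈ P) : v ∈ P := by
    have hnv : n v ∈ P := by simpa [g] using hclosed hv (hσ (g v))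
    exact hclosed hnv (hn v).1.symm
  refine ⟨(hbad a (mem_of_periodicPts_subset hpre subset_rfl a)).1 b, ?_⟩
  rintro (rfl | rfl)
  · exact hσ a
  · simpa using (hσ (σ⁻¹ a)).symm

theorem ndeg_eq_two_and_odd_of_existsUnique_isSachsOn [Finite V] (hdeg : ∀ v, 2 ≤ ndeg H v)
    (h : ∃! S, IsSachsOn H univ S) :
    (∀ v, ndeg H v = 2) ∧ ∀ c : H.ConnectedComponent, Odd (Nat.card c.supp) := by
  obtain ⟨S, hS, hSu⟩ := h
  obtain ⟨σ, hσS⟩ := hS.exists_perm_adj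
  have hσ (v : V) : H.Adj v (σ v) := hS.le (hσS v)
  have huniq (τ : Perm V) (hτ : ∀ v, H.Adj v (τ v)) : permGraph τ = permGraph σ :=
    (hSu _ (isSachsOn_permGraph hτ)).trans (hSu _ (isSachsOn_permGraph hσ)).symm
  have hadj (a b : V) : H.Adj a b ↔ b = σ a ∨ b = σ⁻¹ a := adj_iff_of_permGraph_eq hdeg hσ huniq
  have hnbr (v : V) : H.neighborSet v = {σ v, σ⁻¹ v} := by ext w; exact hadj v w
  have hσσ (v : V) : σ v ≠ σ⁻¹ v := by
    intro h
    have := hdeg v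
    have := ndeg_le_one_of_subset (by rw [hnbr, h, pair_eq_singleton])
    omega
  refine ⟨fun v ↦ by rw [ndeg_eq_ncard, hnbr, ncard_pair (hσσ v)], ?_⟩
  refine ConnectedComponent.ind fun z ↦ ?_
  have hsupp : (H.connectedComponentMk z).supp = {b | σ.SameCycle z b} := by
    ext b
    rw [ConnectedComponent.mem_supp_iff, ConnectedComponent.eq, reachable_comm,
      reachable_iff_sameCycle hadj]
    rfl
  rw [hsupp, σ.card_sameCycle]
  exact Perm.odd_minimalPeriod_of_sameCycle_sq <|
    sameCycle_sq_apply_of_permGraph_eq hσ huniq (Perm.eq_inv_iff_eq.not.1 (hσσ z))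

/-- A vertex of `S`-degree `1` would make its whole component a perfect matching of `S`. -/
lemma eq_of_isSachsOn_of_ndeg_eq_two [Finite V] {S : SimpleGraph V} (h2 : ∀ v, ndeg H v = 2)
    (hodd : ∀ c : H.ConnectedComponent, Odd (Nat.card c.supp)) (hS : IsSachsOn H univ S) :
    S = H := by
  have hfull {v w : V} (hv : ndeg S v = 2) (hvw : H.Adj v w) : S.Adj v w := by
    have := eq_of_subset_of_ncard_le (s := S.neighborSet v) (t := H.neighborSet v)
      (fun _ h ↦ hS.le h)
      (by rw [← ndeg_eq_ncard, ← ndeg_eq_ncard, hv, h2])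
    rw [← mem_neighborSet, this]
    exact hvw
  have hone {v w : V} (hv : ndeg S v = 1) (hvw : H.Reachable v w) : ndeg S w = 1 := by
    rw [reachable_iff_reflTransGen] at hvw
    induction hvw with
    | refl => exact hv
    | tail _ hbc ih =>
      refine (hS.ndeg_eq_one_or_two _ trivial).resolve_right fun h ↦ ?_
      exact hS.not_ndeg_one_two (hfull h hbc.symm).symm ⟨ih, h⟩
  have hdeg2 (v : V) : ndeg S v = 2 := by
    refine (hS.ndeg_eq_one_or_two v trivial).resolve_left fun hv ↦ ?_
    let c := H.connectedComponentMk v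
    have hc (w : c.supp) : ndeg (S.induce c.supp) w = 1 := by
      rw [ndeg_induce_of_forall_adj_mem w.2 fun x hx ↦ ?_]
      · exact hone hv (ConnectedComponent.eq.1 w.2).symm
      · rw [ConnectedComponent.mem_supp_iff, ← (c.mem_supp_iff w).1 w.2]
        exact (ConnectedComponent.connectedComponentMk_eq_of_adj (hS.le hx)).symm
    exact Nat.not_even_iff_odd.2 (hodd c) (even_card_of_forall_ndeg_eq_one hc)
  ext v w
  exact ⟨fun h ↦ hS.le h, hfull (hdeg2 v)⟩

lemma existsUnique_isSachsOn_of_ndeg_eq_two [Finite V] (h2 : ∀ v, ndeg H v = 2)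
    (hodd : ∀ c : H.ConnectedComponent, Odd (Nat.card c.supp)) : ∃! S, IsSachsOn H univ S :=
  ⟨H, ⟨le_rfl, subset_univ _, fun v _ ↦ .inr (h2 v), fun v w _ ↦ by simp [h2]⟩,
    fun _ hS ↦ eq_of_isSachsOn_of_ndeg_eq_two h2 hodd hS⟩

end UniqueSachs

section Pendant

variable {V : Type*} {G S : SimpleGraph V} {U : Set V} {u v : V}

lemma sup_edge_adj_of_ne {w x : V} (hu : w ≠ u) (hv : w ≠ v) :
    (S ⊔ edge u v).Adj w x ↔ S.Adj w x := by
  simp [edge_adj, hu, hv]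

lemma sdiff_edge_adj_of_ne {w x : V} (hu : w ≠ u) (hv : w ≠ v) :
    (S \ edge u v).Adj w x ↔ S.Adj w x := by
  simp [edge_adj, hu, hv]

lemma ndeg_sup_edge_eq_one (huv : u ≠ v) (hu : ∀ x, ¬S.Adj u x) :
    ndeg (S ⊔ edge u v) u = 1 := by
  refine ndeg_eq_one_iff.2 ⟨v, Set.ext fun x ↦ ?_⟩
  simp only [mem_neighborSet, sup_adj, edge_adj, hu, mem_singleton_iff]
  grind

lemma IsSachsOn.neighborSet_eq_of_pendant (hS : IsSachsOn G U S) (hu : u ∈ U)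
    (hpend : ∀ w ∈ U, G.Adj u w → w = v) : S.neighborSet u = {v} ∧ S.neighborSet v = {u} := by
  have hsub : S.neighborSet u ⊆ {v} := fun w hw ↦
    hpend w (hS.support_subset ⟨u, hw.symm⟩) (hS.le hw)
  have huv : S.Adj u v := by
    obtain ⟨w, hw⟩ := nonempty_of_ncard_ne_zero (ndeg_eq_ncard S u ▸ (hS.ndeg_pos hu).ne')
    exact hsub hw ▸ hw
  have hNu : S.neighborSet u = {v} := hsub.antisymm (singleton_subset_iff.2 huv)
  have hdv : ndeg S v = 1 := by
    rw [← hS.ndeg_eq_of_adj huv, ndeg_eq_ncard, hNu, ncard_singleton]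
  obtain ⟨x, hx⟩ := ndeg_eq_one_iff.1 hdv
  have hux : u ∈ S.neighborSet v := huv.symm
  rw [hx, mem_singleton_iff] at hux
  exact ⟨hNu, hux ▸ hx⟩

lemma IsSachsOn.sdiff_edge (hS : IsSachsOn G U S) (hu : u ∈ U)
    (hpend : ∀ w ∈ U, G.Adj u w → w = v) : IsSachsOn G (U \ {u, v}) (S \ edge u v) := by
  obtain ⟨hNu, hNv⟩ := hS.neighborSet_eq_of_pendant hu hpend
  have huv : u ≠ v := (hNu ▸ mem_singleton v : v ∈ S.neighborSet u).ne
  have hoff {w x : V} (h : (S \ edge u v).Adj w x) : w ≠ u ∧ w ≠ v := by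
    obtain ⟨hwx, hne⟩ := (sdiff_adj _ _ _ _).1 h
    constructor <;> rintro rfl
    · rw [(hNu ▸ hwx : x ∈ ({v} : Set V))] at hne
      exact hne (edge_adj _ _ _ _ |>.2 ⟨.inl ⟨rfl, rfl⟩, huv⟩)
    · rw [(hNv ▸ hwx : x ∈ ({u} : Set V))] at hne
      exact hne (edge_adj _ _ _ _ |>.2 ⟨.inr ⟨rfl, rfl⟩, huv.symm⟩)
  have hdeg {w : V} (hu : w ≠ u) (hv : w ≠ v) : ndeg (S \ edge u v) w = ndeg S w :=
    ndeg_congr fun _ ↦ sdiff_edge_adj_of_ne hu hv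
  refine ⟨sdiff_le.trans hS.le, ?_, ?_, fun w x hwx ↦ ?_⟩
  · rintro w ⟨x, hwx⟩
    obtain ⟨hwu, hwv⟩ := hoff hwx
    exact ⟨hS.support_subset ⟨x, hwx.1⟩, by simp [hwu, hwv]⟩
  · rintro w ⟨hwU, hw⟩
    simp only [mem_insert_iff, mem_singleton_iff, not_or] at hw
    rw [hdeg hw.1 hw.2]
    exact hS.ndeg_eq_one_or_two w hwU
  · obtain ⟨hwu, hwv⟩ := hoff hwx
    obtain ⟨hxu, hxv⟩ := hoff hwx.symm
    rw [hdeg hwu hwv, hdeg hxu hxv]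
    exact hS.not_ndeg_one_two hwx.1

lemma IsSachsOn.sup_edge (hS : IsSachsOn G (U \ {u, v}) S) (hu : u ∈ U) (hv : v ∈ U)
    (huv : G.Adj u v) : IsSachsOn G U (S ⊔ edge u v) := by
  have hoff {w x : V} (h : S.Adj w x) : w ≠ u ∧ w ≠ v := by
    simpa using (hS.support_subset ⟨x, h⟩).2
  have hdeg {w : V} (hu : w ≠ u) (hv : w ≠ v) : ndeg (S ⊔ edge u v) w = ndeg S w :=
    ndeg_congr fun _ ↦ sup_edge_adj_of_ne hu hv
  have hdeg_u : ndeg (S ⊔ edge u v) u = 1 :=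
    ndeg_sup_edge_eq_one huv.ne fun _ h ↦ (hoff h).1 rfl
  have hdeg_v : ndeg (S ⊔ edge u v) v = 1 := by
    rw [edge_comm]
    exact ndeg_sup_edge_eq_one huv.ne' fun _ h ↦ (hoff h).2 rfl
  refine ⟨sup_le hS.le ((edge_le_iff _).2 (.inr huv)), ?_, fun w hw ↦ ?_, ?_⟩
  · rintro w ⟨x, hwx | hwx⟩
    · exact (hS.support_subset ⟨x, hwx⟩).1
    · rcases ((edge_adj _ _ _ _).1 hwx).1 with ⟨rfl, -⟩ | ⟨rfl, -⟩ <;> assumption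
  · by_cases hwu : w = u
    · exact .inl (hwu ▸ hdeg_u)
    by_cases hwv : w = v
    · exact .inl (hwv ▸ hdeg_v)
    rw [hdeg hwu hwv]
    exact hS.ndeg_eq_one_or_two w ⟨hw, by simp [hwu, hwv]⟩
  · rintro w x (hwx | hwx)
    · obtain ⟨hwu, hwv⟩ := hoff hwx
      obtain ⟨hxu, hxv⟩ := hoff hwx.symm
      rw [hdeg hwu hwv, hdeg hxu hxv]
      exact hS.not_ndeg_one_two hwx
    · rcases ((edge_adj _ _ _ _).1 hwx).1 with ⟨-, rfl⟩ | ⟨-, rfl⟩ <;> simp [hdeg_u, hdeg_v]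

lemma existsUnique_isSachsOn_sdiff_iff (hu : u ∈ U) (hv : v ∈ U) (huv : G.Adj u v)
    (hpend : ∀ w ∈ U, G.Adj u w → w = v) :
    (∃! S, IsSachsOn G (U \ {u, v}) S) ↔ ∃! S, IsSachsOn G U S := by
  refine existsUnique_congr_of_invOn (· ⊔ edge u v) (· \ edge u v)
    (fun S hS ↦ hS.sup_edge hu hv huv) (fun S hS ↦ hS.sdiff_edge hu hpend)
    (fun S hS ↦ Disjoint.sup_sdiff_cancel_right ?_) (fun S hS ↦ sdiff_sup_cancel ?_)
  · exact (disjoint_edge _).2 fun h ↦ (hS.support_subset ⟨v, h⟩).2 (mem_insert u _)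
  · have := (hS.neighborSet_eq_of_pendant hu hpend).1
    exact (edge_le_iff _).2 (.inr (this ▸ mem_singleton v : v ∈ S.neighborSet u))

lemma eq_of_ndeg_induce_eq_one {w : V}
    (hu : u ∈ U) (hdeg : ndeg (G.induce U) ⟨u, hu⟩ = 1) (hv : v ∈ U) (huv : G.Adj u v)
    (hw : w ∈ U) (huw : G.Adj u w) : w = v := by
  obtain ⟨a, ha⟩ := ndeg_eq_one_iff.1 hdeg
  have hva : (⟨v, hv⟩ : U) ∈ (G.induce U).neighborSet ⟨u, hu⟩ := huv
  have hwa : (⟨w, hw⟩ : U) ∈ (G.induce U).neighborSet ⟨u, hu⟩ := huw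
  rw [ha, mem_singleton_iff] at hva hwa
  exact congrArg Subtype.val (hwa.trans hva.symm)

end Pendant

section Reduction

variable {n : ℕ} {G : SimpleGraph (Fin n)}

lemma existsUnique_isSachsOn_of_pendantReduces {U W : Finset (Fin n)}
    (h : PendantReduces G U W) (hW : IsIndependentOddCycles G W) : ∃! S, IsSachsOn G ↑U S := by
  induction h with
  | refl U =>
    exact existsUnique_isSachsOn_iff_induce.2 (existsUnique_isSachsOn_of_ndeg_eq_two hW.1 hW.2)
  | step u v hu hv huv hdeg _ ih =>
    rw [← existsUnique_isSachsOn_sdiff_iff hu hv huv fun w hw ↦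
      eq_of_ndeg_induce_eq_one hu hdeg hv huv hw]
    simpa using ih hW

lemma exists_pendantReduces_of_existsUnique_isSachsOn (U : Finset (Fin n))
    (h : ∃! S, IsSachsOn G ↑U S) : ∃ W, PendantReduces G U W ∧ IsIndependentOddCycles G W := by
  induction U using Finset.strongInduction with
  | H U ih =>
  have h' := existsUnique_isSachsOn_iff_induce.1 h
  by_cases hdeg : ∀ x : (↑U : Set (Fin n)), 2 ≤ ndeg (G.induce ↑U) x
  · exact ⟨U, .refl U, ndeg_eq_two_and_odd_of_existsUnique_isSachsOn hdeg h'⟩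
  push Not at hdeg
  obtain ⟨⟨u, hu⟩, hlt⟩ := hdeg
  have hpos : 0 < ndeg (G.induce ↑U) ⟨u, hu⟩ := by
    obtain ⟨T, hT, -⟩ := h'
    exact (hT.ndeg_pos trivial).trans_le (ndeg_mono hT.le _)
  have hdeg1 : ndeg (G.induce ↑U) ⟨u, hu⟩ = 1 := by omega
  obtain ⟨⟨v, hv⟩, hN⟩ := ndeg_eq_one_iff.1 hdeg1
  have huv : G.Adj u v := (hN ▸ mem_singleton _ : (⟨v, hv⟩ : (↑U : Set (Fin n))) ∈ _)
  have hpend (w : Fin n) (hw : w ∈ (↑U : Set (Fin n))) (huw : G.Adj u w) : w = v :=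
    eq_of_ndeg_induce_eq_one hu hdeg1 hv huv hw huw
  have hsub : U \ {u, v} ⊂ U :=
    Finset.sdiff_ssubset (Finset.insert_subset hu (Finset.singleton_subset_iff.2 hv))
      ⟨u, Finset.mem_insert_self _ _⟩
  obtain ⟨W, hred, hW⟩ := ih _ hsub <| by
    simpa using (existsUnique_isSachsOn_sdiff_iff hu hv huv hpend).2 h
  exact ⟨W, .step u v hu hv huv hdeg1 hred, hW⟩

end Reduction

/-- A simple graph `G` has a unique Sachs subgraph if and only if `G` can
be reduced to a (possibly empty) family of pairwise independent odd cycles by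
repeatedly deleting pendant edges together with both of their end-vertices. -/
theorem unique_sachs_iff_reduces_to_independent_odd_cycles
    {n : ℕ} (G : SimpleGraph (Fin n)) :
    (∃! S : SimpleGraph (Fin n), IsSachsSubgraph G S) ↔
      ∃ U : Finset (Fin n), PendantReduces G Finset.univ U ∧
        IsIndependentOddCycles G U := by
  have huniv : (∃! S, IsSachsSubgraph G S) ↔
      ∃! S, IsSachsOn G ↑(Finset.univ : Finset (Fin n)) S := by
    simp only [isSachsSubgraph_iff_isSachsOn_univ, Finset.coe_univ]
  rw [huniv]
  exact ⟨exists_pendantReduces_of_existsUnique_isSachsOn _,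
    fun ⟨_, hred, hU⟩ ↦ existsUnique_isSachsOn_of_pendantReduces hred hU⟩
end

section
/- Let (G,σ) be a signed graph with a perfect matching M such that for every weight function w: E(G) → [−1,1] with w(e) ∈ {−1,1} for all e ∈ M, the weighted graph (G,w) is invertible. Then the spectrum of (G,σ) splits about the origin: exactly half its eigenvalues are positive and half are negative. -/
/-!
Write `P` for the signed adjacency matrix of the matching. Every matrix `P + t (A - P)` with
`t ∈ [0, 1]` is the weighted adjacency matrix of `G` with weights `σ` on `M` and `t σ`
elsewhere, so it is invertible by hypothesis. For invertible symmetric matrices the numbers of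
positive and of negative eigenvalues are locally constant: if `‖C - B‖` is smaller than every
`|λ|` of `B`, the quadratic form of `C` stays positive on the span of the positive eigenvectors
of `B`, and a subspace on which the form of `C` is positive meets the span of the nonpositive
eigenvectors of `C` trivially (likewise with the signs exchanged). Hence `A` has the inertia
of `P`, and `P² = 1`, `tr P = 0` force `P` to have `m` eigenvalues `1` and `m` eigenvalues `-1`.
-/

open scoped Classical

/-- `M` is a perfect matching of `G`, as a spanning subgraph of `K₂` components. -/
def IsPerfectMatchingSub {V : Type*} (G M : SimpleGraph V) : Prop :=
  M ≤ G ∧ ∀ v, ndeg M v = 1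

open scoped RealInnerProductSpace
open Matrix Module Submodule

namespace OrthonormalBasis

variable {ι 𝕜 E : Type*} [Fintype ι] [RCLike 𝕜] [NormedAddCommGroup E]
  [InnerProductSpace 𝕜 E] (b : OrthonormalBasis ι 𝕜 E)

lemma inner_eq_zero_of_mem_span_image {s : Set ι} {x : E} (hx : x ∈ span 𝕜 (b '' s))
    {i : ι} (hi : i ∉ s) : inner 𝕜 (b i) x = 0 := by
  rw [← b.coe_toBasis, b.toBasis.mem_span_image] at hx
  rw [← b.repr_apply_apply, ← b.coe_toBasis_repr_apply]
  exact Finsupp.notMem_support_iff.1 fun h => hi (hx h)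

lemma finrank_span_image (s : Set ι) : finrank 𝕜 (span 𝕜 (b '' s)) = Nat.card s := by
  rw [Set.image_eq_range, Nat.card_eq_fintype_card]
  exact finrank_span_eq_card (b.orthonormal.linearIndependent.comp _ Subtype.val_injective)

lemma finrank_le_card_of_disjoint_span_compl {U : Submodule 𝕜 E}
    {s : Set ι} (hU : Disjoint U (span 𝕜 (b '' sᶜ))) : finrank 𝕜 U ≤ Nat.card s := by
  have := b.toBasis.finiteDimensional_of_finite
  have h := Submodule.finrank_add_finrank_le_of_disjoint hU
  rw [b.finrank_span_image, finrank_eq_card_basis b.toBasis, Nat.card_eq_fintype_card,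
    Fintype.card_compl_set] at h
  have := Fintype.card_subtype_le (· ∈ s)
  rw [Nat.card_eq_fintype_card]
  omega

end OrthonormalBasis

lemma exists_pos_forall_le_abs {ι : Type*} [Finite ι] {f : ι → ℝ} (hf : ∀ i, f i ≠ 0) :
    ∃ c > 0, ∀ i, c ≤ |f i| := by
  rcases isEmpty_or_nonempty ι with hι | hι
  · exact ⟨1, one_pos, isEmptyElim⟩
  · obtain ⟨i₀, hi₀⟩ := Finite.exists_min fun i => |f i|
    exact ⟨|f i₀|, abs_pos.2 (hf i₀), hi₀⟩

lemma card_pos_add_card_neg {ι : Type*} [Fintype ι] {f : ι → ℝ} (hf : ∀ i, f i ≠ 0) :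
    Nat.card {i // 0 < f i} + Nat.card {i // f i < 0} = Fintype.card ι := by
  have : Nat.card {i // f i < 0} = Nat.card {i // ¬ 0 < f i} :=
    Nat.card_congr <| Equiv.subtypeEquivRight fun i =>
      ⟨not_lt_of_gt, fun h => (not_lt.1 h).lt_of_ne (hf i)⟩
  rw [this, Nat.card_eq_fintype_card, Nat.card_eq_fintype_card, Fintype.card_subtype_compl]
  have := Fintype.card_subtype_le fun i => 0 < f i
  omega

lemma card_pos_and_card_neg_eq_of_sum_eq_zero {ι : Type*} [Fintype ι] {m : ℕ}
    (hcard : Fintype.card ι = 2 * m) {f : ι → ℝ} (hf : ∀ i, f i = 1 ∨ f i = -1)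
    (hsum : ∑ i, f i = 0) :
    Nat.card {i // 0 < f i} = m ∧ Nat.card {i // f i < 0} = m := by
  have hf' : ∀ i, f i = 2 * (if 0 < f i then 1 else 0) - 1 := fun i => by
    rcases hf i with h | h <;> norm_num [h]
  have hsum' : ∑ i, f i = 2 * Nat.card {i // 0 < f i} - Fintype.card ι := by
    rw [Finset.sum_congr rfl fun i _ => hf' i, Finset.sum_sub_distrib, ← Finset.mul_sum,
      Finset.sum_boole, Nat.card_eq_fintype_card, Fintype.card_subtype]
    simp
  have hpos : Nat.card {i // 0 < f i} = m := by
    rw [hsum, hcard] at hsum'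
    exact_mod_cast (by push_cast at hsum'; linarith : (Nat.card {i // 0 < f i} : ℝ) = m)
  have := card_pos_add_card_neg (f := f) fun i => by rcases hf i with h | h <;> norm_num [h]
  omega

lemma Matrix.abs_inner_toEuclideanCLM_sub_le {n : Type*} [Fintype n] [DecidableEq n]
    (B C : Matrix n n ℝ) (x : EuclideanSpace ℝ n) :
    |⟪x, toEuclideanCLM (𝕜 := ℝ) C x⟫ - ⟪x, toEuclideanCLM (𝕜 := ℝ) B x⟫| ≤
      ‖toEuclideanCLM (𝕜 := ℝ) (C - B)‖ * ‖x‖ ^ 2 := by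
  rw [← inner_sub_right, ← _root_.sub_apply, ← map_sub]
  calc _ ≤ ‖x‖ * ‖toEuclideanCLM (𝕜 := ℝ) (C - B) x‖ := abs_real_inner_le_norm _ _
    _ ≤ ‖x‖ * (‖toEuclideanCLM (𝕜 := ℝ) (C - B)‖ * ‖x‖) := by
      gcongr
      exact ContinuousLinearMap.le_opNorm _ _
    _ = _ := by ring

namespace Matrix.IsHermitian

variable {n : Type*} [Fintype n] [DecidableEq n] {B C : Matrix n n ℝ}
  (hB : B.IsHermitian) (hC : C.IsHermitian)

lemma toEuclideanCLM_eigenvectorBasis (i : n) :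
    toEuclideanCLM (𝕜 := ℝ) B (hB.eigenvectorBasis i) =
      hB.eigenvalues i • hB.eigenvectorBasis i :=
  WithLp.ofLp_injective 2 (by simpa using hB.mulVec_eigenvectorBasis i)

lemma inner_toEuclideanCLM_self (x : EuclideanSpace ℝ n) :
    ⟪x, toEuclideanCLM (𝕜 := ℝ) B x⟫ =
      ∑ i, hB.eigenvalues i * ⟪hB.eigenvectorBasis i, x⟫ ^ 2 := by
  nth_rw 2 [← hB.eigenvectorBasis.sum_repr x]
  rw [map_sum, inner_sum]
  refine Finset.sum_congr rfl fun i _ => ?_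
  rw [map_smul, hB.toEuclideanCLM_eigenvectorBasis, real_inner_smul_right, real_inner_smul_right,
    hB.eigenvectorBasis.repr_apply_apply, real_inner_comm x]
  ring

lemma le_inner_toEuclideanCLM_self_of_mem_span {s : Set n} {a : ℝ}
    (ha : ∀ i ∈ s, a ≤ hB.eigenvalues i) {x : EuclideanSpace ℝ n}
    (hx : x ∈ span ℝ (hB.eigenvectorBasis '' s)) :
    a * ‖x‖ ^ 2 ≤ ⟪x, toEuclideanCLM (𝕜 := ℝ) B x⟫ := by
  rw [hB.inner_toEuclideanCLM_self, ← hB.eigenvectorBasis.sum_sq_inner_right, Finset.mul_sum]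
  refine Finset.sum_le_sum fun i _ => ?_
  by_cases hi : i ∈ s
  · exact mul_le_mul_of_nonneg_right (ha i hi) (sq_nonneg _)
  · simp [hB.eigenvectorBasis.inner_eq_zero_of_mem_span_image hx hi]

lemma inner_toEuclideanCLM_self_le_of_mem_span {s : Set n} {a : ℝ}
    (ha : ∀ i ∈ s, hB.eigenvalues i ≤ a) {x : EuclideanSpace ℝ n}
    (hx : x ∈ span ℝ (hB.eigenvectorBasis '' s)) :
    ⟪x, toEuclideanCLM (𝕜 := ℝ) B x⟫ ≤ a * ‖x‖ ^ 2 := by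
  rw [hB.inner_toEuclideanCLM_self, ← hB.eigenvectorBasis.sum_sq_inner_right, Finset.mul_sum]
  refine Finset.sum_le_sum fun i _ => ?_
  by_cases hi : i ∈ s
  · exact mul_le_mul_of_nonneg_right (ha i hi) (sq_nonneg _)
  · simp [hB.eigenvectorBasis.inner_eq_zero_of_mem_span_image hx hi]

lemma finrank_le_card_eigenvalues_pos {U : Submodule ℝ (EuclideanSpace ℝ n)}
    (hU : ∀ x ∈ U, x ≠ 0 → 0 < ⟪x, toEuclideanCLM (𝕜 := ℝ) B x⟫) :
    finrank ℝ U ≤ Nat.card {i // 0 < hB.eigenvalues i} := by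
  refine hB.eigenvectorBasis.finrank_le_card_of_disjoint_span_compl
    (s := {i | 0 < hB.eigenvalues i}) (Submodule.disjoint_def.2 fun x hxU hx => ?_)
  by_contra hx0
  have := hB.inner_toEuclideanCLM_self_le_of_mem_span (a := 0) (fun i hi => not_lt.1 hi) hx
  linarith [hU x hxU hx0]

lemma finrank_le_card_eigenvalues_neg {U : Submodule ℝ (EuclideanSpace ℝ n)}
    (hU : ∀ x ∈ U, x ≠ 0 → ⟪x, toEuclideanCLM (𝕜 := ℝ) B x⟫ < 0) :
    finrank ℝ U ≤ Nat.card {i // hB.eigenvalues i < 0} := by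
  refine hB.eigenvectorBasis.finrank_le_card_of_disjoint_span_compl
    (s := {i | hB.eigenvalues i < 0}) (Submodule.disjoint_def.2 fun x hxU hx => ?_)
  by_contra hx0
  have := hB.le_inner_toEuclideanCLM_self_of_mem_span (a := 0) (fun i hi => not_lt.1 hi) hx
  linarith [hU x hxU hx0]

lemma card_eigenvalues_pos_le_of_norm_sub_lt {c : ℝ} (hc : ∀ i, c ≤ |hB.eigenvalues i|)
    (hCB : ‖toEuclideanCLM (𝕜 := ℝ) (C - B)‖ < c) :
    Nat.card {i // 0 < hB.eigenvalues i} ≤ Nat.card {i // 0 < hC.eigenvalues i} := by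
  refine (hB.eigenvectorBasis.finrank_span_image {i | 0 < hB.eigenvalues i}).symm.trans_le
    (hC.finrank_le_card_eigenvalues_pos fun x hx hx0 => ?_)
  have hBx := hB.le_inner_toEuclideanCLM_self_of_mem_span
    (fun i hi => (hc i).trans (abs_of_pos hi).le) hx
  have hCBx := (abs_le.1 (abs_inner_toEuclideanCLM_sub_le B C x)).1
  have : 0 < (c - ‖toEuclideanCLM (𝕜 := ℝ) (C - B)‖) * ‖x‖ ^ 2 :=
    mul_pos (sub_pos.2 hCB) (by positivity)
  linarith

lemma card_eigenvalues_neg_le_of_norm_sub_lt {c : ℝ} (hc : ∀ i, c ≤ |hB.eigenvalues i|)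
    (hCB : ‖toEuclideanCLM (𝕜 := ℝ) (C - B)‖ < c) :
    Nat.card {i // hB.eigenvalues i < 0} ≤ Nat.card {i // hC.eigenvalues i < 0} := by
  refine (hB.eigenvectorBasis.finrank_span_image {i | hB.eigenvalues i < 0}).symm.trans_le
    (hC.finrank_le_card_eigenvalues_neg fun x hx hx0 => ?_)
  have hBx := hB.inner_toEuclideanCLM_self_le_of_mem_span (a := -c)
    (fun i (hi : hB.eigenvalues i < 0) => by linarith [hc i, abs_of_neg hi]) hx
  have hCBx := (abs_le.1 (abs_inner_toEuclideanCLM_sub_le B C x)).2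
  have : 0 < (c - ‖toEuclideanCLM (𝕜 := ℝ) (C - B)‖) * ‖x‖ ^ 2 :=
    mul_pos (sub_pos.2 hCB) (by positivity)
  linarith

lemma eigenvalues_ne_zero (hdet : B.det ≠ 0) (i : n) :
    hB.eigenvalues i ≠ 0 := by
  rw [hB.det_eq_prod_eigenvalues] at hdet
  exact_mod_cast Finset.prod_ne_zero_iff.1 hdet i (Finset.mem_univ i)

theorem isLocallyConstant_card_eigenvalues {X : Type*} [TopologicalSpace X]
    {A : X → Matrix n n ℝ} (hA : Continuous A) (hherm : ∀ x, (A x).IsHermitian)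
    (hdet : ∀ x, (A x).det ≠ 0) :
    IsLocallyConstant fun x =>
      (Nat.card {i // 0 < (hherm x).eigenvalues i},
        Nat.card {i // (hherm x).eigenvalues i < 0}) := by
  rw [IsLocallyConstant.iff_eventually_eq]
  intro x₀
  obtain ⟨c, hc0, hc⟩ := exists_pos_forall_le_abs ((hherm x₀).eigenvalues_ne_zero (hdet x₀))
  have hcont : Continuous fun x => toEuclideanCLM (𝕜 := ℝ) (A x - A x₀) :=
    (LinearMap.continuous_of_finiteDimensional
      (toEuclideanCLM (𝕜 := ℝ) (n := n)).toAlgEquiv.toLinearMap).comp (hA.sub continuous_const)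
  have hnear : ∀ᶠ x in nhds x₀, ‖toEuclideanCLM (𝕜 := ℝ) (A x - A x₀)‖ < c :=
    hcont.norm.continuousAt.eventually_lt continuousAt_const (by simpa using hc0)
  filter_upwards [hnear] with x hx
  have hpos := (hherm x₀).card_eigenvalues_pos_le_of_norm_sub_lt (hherm x) hc hx
  have hneg := (hherm x₀).card_eigenvalues_neg_le_of_norm_sub_lt (hherm x) hc hx
  have h₀ := card_pos_add_card_neg ((hherm x₀).eigenvalues_ne_zero (hdet x₀))
  have h := card_pos_add_card_neg ((hherm x).eigenvalues_ne_zero (hdet x))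
  ext <;> dsimp only <;> omega

theorem card_eigenvalues_eq_of_det_add_smul_sub_ne_zero
    (hdet : ∀ t ∈ Set.Icc (0 : ℝ) 1, (B + t • (C - B)).det ≠ 0) :
    Nat.card {i // 0 < hB.eigenvalues i} = Nat.card {i // 0 < hC.eigenvalues i} ∧
      Nat.card {i // hB.eigenvalues i < 0} = Nat.card {i // hC.eigenvalues i < 0} := by
  have hherm : ∀ t : unitInterval, (B + (t : ℝ) • (C - B)).IsHermitian := fun t =>
    hB.add ((hC.sub hB).smul (.all _))
  have h := (isLocallyConstant_card_eigenvalues (by fun_prop) hherm fun t =>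
    hdet t t.2).apply_eq_of_preconnectedSpace 0 1
  have h0 : (hherm 0).eigenvalues = hB.eigenvalues :=
    ((hherm 0).eigenvalues_eq_eigenvalues_iff hB).2 (by simp)
  have h1 : (hherm 1).eigenvalues = hC.eigenvalues :=
    ((hherm 1).eigenvalues_eq_eigenvalues_iff hC).2 (by simp)
  simpa only [h0, h1, Prod.mk.injEq] using h

lemma eigenvalues_eq_one_or_neg_one (hB2 : B * B = 1) (i : n) :
    hB.eigenvalues i = 1 ∨ hB.eigenvalues i = -1 := by
  set v := (hB.eigenvectorBasis i).ofLp
  have hv : v ≠ 0 := fun h => hB.eigenvectorBasis.orthonormal.ne_zero i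
    (WithLp.ofLp_injective 2 (by rw [WithLp.ofLp_zero]; exact h))
  have hBv : B *ᵥ v = hB.eigenvalues i • v := hB.mulVec_eigenvectorBasis i
  have : (hB.eigenvalues i * hB.eigenvalues i) • v = (1 : ℝ) • v := by
    rw [mul_smul, ← hBv, ← mulVec_smul, ← hBv, mulVec_mulVec, hB2, one_mulVec, one_smul]
  exact mul_self_eq_one_iff.1 (smul_left_injective ℝ hv this)

lemma card_eigenvalues_pos_and_neg_eq_of_mul_self_eq_one {m : ℕ} (hcard : Fintype.card n = 2 * m)
    (hB2 : B * B = 1) (htr : B.trace = 0) :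
    Nat.card {i // 0 < hB.eigenvalues i} = m ∧ Nat.card {i // hB.eigenvalues i < 0} = m :=
  card_pos_and_card_neg_eq_of_sum_eq_zero hcard (hB.eigenvalues_eq_one_or_neg_one hB2)
    (by simpa [hB.trace_eq_sum_eigenvalues] using htr)

end Matrix.IsHermitian

lemma existsUnique_adj_of_ndeg_eq_one {V : Type*} {M : SimpleGraph V} {v : V} (h : ndeg M v = 1) :
    ∃! u, M.Adj v u := by
  obtain ⟨⟨u, hu⟩, huniq⟩ := Nat.card_eq_one_iff_exists.1 h
  exact ⟨u, hu, fun u' hu' => congrArg Subtype.val (huniq ⟨u', hu'⟩)⟩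

namespace SimpleGraph

variable {V : Type*} (G M : SimpleGraph V) (σ : V → V → ℝ)

noncomputable def signedAdjMatrix : Matrix V V ℝ :=
  Matrix.of fun i j => if G.Adj i j then σ i j else 0

variable {G M σ}

lemma isHermitian_signedAdjMatrix (hσ : ∀ i j, σ i j = σ j i) :
    (G.signedAdjMatrix σ).IsHermitian := by
  ext i j
  simp [signedAdjMatrix, G.adj_comm j i, hσ j i]

lemma trace_signedAdjMatrix [Fintype V] : (G.signedAdjMatrix σ).trace = 0 := by
  simp [Matrix.trace, signedAdjMatrix]

lemma signedAdjMatrix_mul_self [Fintype V] [DecidableEq V] (hM : ∀ v, ∃! u, M.Adj v u)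
    (hσ : ∀ i j, M.Adj i j → σ i j * σ j i = 1) :
    M.signedAdjMatrix σ * M.signedAdjMatrix σ = 1 := by
  ext i j
  obtain ⟨u, hiu, hu⟩ := hM i
  rw [Matrix.mul_apply, Finset.sum_eq_single u
    (fun k _ hk => by simp [signedAdjMatrix, (hu k).mt hk]) (by simp)]
  by_cases hij : i = j
  · subst hij
    simp [signedAdjMatrix, hiu, hiu.symm, hσ i u hiu]
  · have : ¬ M.Adj u j := fun huj => hij ((hM u).unique hiu.symm huj)
    simp [signedAdjMatrix, hij, this]

lemma signedAdjMatrix_add_smul_sub (hMG : M ≤ G) (t : ℝ) :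
    M.signedAdjMatrix σ + t • (G.signedAdjMatrix σ - M.signedAdjMatrix σ) =
      G.signedAdjMatrix fun i j => if M.Adj i j then σ i j else t * σ i j := by
  ext i j
  by_cases hM : M.Adj i j
  · simp [signedAdjMatrix, hM, hMG hM]
  · by_cases hG : G.Adj i j <;> simp [signedAdjMatrix, hM, hG]

end SimpleGraph

/-- Let `(G,σ)` be a signed graph on `2m` vertices with a perfect
matching `M` such that for every weight function `w : E(G) → [−1,1]` with
`w(e) ∈ {−1,1}` for all `e ∈ M`, the weighted graph `(G,w)` is invertible.  Then the
spectrum of `(G,σ)` splits about the origin: exactly half of the eigenvalues are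
positive and half are negative. -/
theorem invertible_for_all_weights_implies_spectrum_splits
    {m : ℕ} (G : SimpleGraph (Fin (2 * m)))
    (M : SimpleGraph (Fin (2 * m))) (hM : IsPerfectMatchingSub G M)
    (σ : Fin (2 * m) → Fin (2 * m) → ℝ)
    (hσsymm : ∀ i j, σ i j = σ j i)
    (hσval : ∀ i j, G.Adj i j → σ i j = 1 ∨ σ i j = -1)
    (hinv : ∀ w : Fin (2 * m) → Fin (2 * m) → ℝ,
      (∀ i j, w i j = w j i) →
      (∀ i j, G.Adj i j → w i j ∈ Set.Icc (-1 : ℝ) 1) →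
      (∀ i j, M.Adj i j → w i j = 1 ∨ w i j = -1) →
      (Matrix.of fun i j => if G.Adj i j then w i j else 0).det ≠ 0)
    (A : Matrix (Fin (2 * m)) (Fin (2 * m)) ℝ)
    (hAdef : A = Matrix.of fun i j => if G.Adj i j then σ i j else 0)
    (hA : A.IsHermitian) :
    Nat.card {i // 0 < hA.eigenvalues i} = m ∧
    Nat.card {i // hA.eigenvalues i < 0} = m := by
  obtain ⟨hMG, hdeg⟩ := hM
  have habs : ∀ i j, G.Adj i j → |σ i j| = 1 := fun i j hij => by
    rcases hσval i j hij with h | h <;> simp [h]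
  have hP := SimpleGraph.isHermitian_signedAdjMatrix (G := M) hσsymm
  obtain ⟨hpos, hneg⟩ := hP.card_eigenvalues_eq_of_det_add_smul_sub_ne_zero hA fun t ht => by
    rw [show A = G.signedAdjMatrix σ from hAdef, SimpleGraph.signedAdjMatrix_add_smul_sub hMG]
    refine hinv _ (fun i j => by rw [M.adj_comm, hσsymm]) (fun i j hij => ?_)
      (fun i j hij => by simpa [hij] using hσval i j (hMG hij))
    rw [Set.mem_Icc, ← abs_le]
    split_ifs
    · exact (habs i j hij).le
    · rw [abs_mul, habs i j hij, mul_one, abs_of_nonneg ht.1]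
      exact ht.2
  rw [← hpos, ← hneg]
  refine hP.card_eigenvalues_pos_and_neg_eq_of_mul_self_eq_one (by simp)
    (SimpleGraph.signedAdjMatrix_mul_self (fun v => existsUnique_adj_of_ndeg_eq_one (hdeg v))
      fun i j hij => ?_) SimpleGraph.trace_signedAdjMatrix
  rw [hσsymm j i, ← abs_mul_abs_self, habs i j (hMG hij), one_mul]
end

section
/- The spectrum of every (unsigned, simple) corona graph splits about the origin: if G is the corona of a graph H with n vertices, then G has 2n vertices, n of its adjacency eigenvalues are positive and n are negative. -/
/-! The adjacency matrix of the corona of `H` is the block matrix `[[B, 1], [1, 0]]`, where `B` is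
the adjacency matrix of `H`. Diagonalising `B = U D Uᴴ` and conjugating by `diag(U, U)` turns it
into `[[D, 1], [1, 0]]`, whose characteristic polynomial is `∏ᵢ (X² - μᵢ X - 1)` for the
eigenvalues `μᵢ` of `B`. Each factor has two real roots with product `-1`, one positive and one
negative. -/

open scoped Classical

/-- The corona of a graph `H` on `Fin n`: each vertex `inl i` (a vertex `v_i` of `H`)
gets a new pendant neighbor `inr i` (the vertex `u_i`). -/
def corona {n : ℕ} (H : SimpleGraph (Fin n)) : SimpleGraph (Fin n ⊕ Fin n) where
  Adj x y :=
    match x, y with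
    | .inl i, .inl j => H.Adj i j
    | .inl i, .inr j => i = j
    | .inr i, .inl j => i = j
    | .inr _, .inr _ => False
  symm := by
    constructor
    rintro (i | i) (j | j) h
    · exact H.adj_symm h
    · exact h.symm
    · exact h.symm
    · exact h.elim
  loopless := by
    constructor
    rintro (i | i) h
    · exact (H.ne_of_adj h) rfl
    · exact h.elim

open Matrix Polynomial

namespace Polynomial

theorem exists_pos_neg_factorization_X_sq_sub (b : ℝ) {c : ℝ} (hc : 0 < c) :
    ∃ p q : ℝ, 0 < p ∧ q < 0 ∧ X ^ 2 - C b * X - C c = (X - C p) * (X - C q) := by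
  set s := √(b ^ 2 + 4 * c)
  have hs : s ^ 2 = b ^ 2 + 4 * c := Real.sq_sqrt (by positivity)
  have hs0 : 0 ≤ s := Real.sqrt_nonneg _
  refine ⟨(b + s) / 2, (b - s) / 2, by nlinarith, by nlinarith, ?_⟩
  have hsum : C b = C ((b + s) / 2) + C ((b - s) / 2) := by rw [← C_add]; congr 1; ring
  have hprod : C c = -(C ((b + s) / 2) * C ((b - s) / 2)) := by
    rw [← C_mul, ← C_neg]; congr 1; nlinarith
  rw [hsum, hprod]
  ring

theorem roots_prod_X_sub_C_mul_X_sub_C {R ι : Type*} [CommRing R] [IsDomain R] [Fintype ι]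
    (p q : ι → R) :
    (∏ i, (X - C (p i)) * (X - C (q i))).roots =
      Finset.univ.val.map p + Finset.univ.val.map q := by
  have hne : ∀ i, (X - C (p i)) * (X - C (q i)) ≠ 0 :=
    fun i => mul_ne_zero (X_sub_C_ne_zero _) (X_sub_C_ne_zero _)
  rw [roots_prod _ _ (Finset.prod_ne_zero_iff.mpr fun i _ => hne i)]
  simp [roots_mul (hne _), Multiset.bind_singleton]

end Polynomial

namespace Matrix

variable {ι : Type*} [Fintype ι] [DecidableEq ι]

theorem det_fromBlocks_diagonal {R : Type*} [CommRing R] (a b c d : ι → R) :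
    (fromBlocks (diagonal a) (diagonal b) (diagonal c) (diagonal d)).det =
      ∏ i, (a i * d i - b i * c i) := by
  let e : Fin 2 × ι ≃ ι ⊕ ι :=
    (finTwoEquiv.prodCongr (Equiv.refl ι)).trans (Equiv.boolProdEquivSum ι)
  have : fromBlocks (diagonal a) (diagonal b) (diagonal c) (diagonal d) =
      (blockDiagonal fun i => !![a i, b i; c i, d i]).submatrix e.symm e.symm := by
    ext (i | i) (j | j) <;> by_cases h : i = j <;> simp [e, finTwoEquiv, blockDiagonal_apply, h]
  rw [this, det_submatrix_equiv_self, det_blockDiagonal]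
  simp [det_fin_two_of]

theorem charpoly_fromBlocks_diagonal_one_one_zero {R : Type*} [CommRing R] (d : ι → R) :
    (fromBlocks (diagonal d) 1 1 (0 : Matrix ι ι R)).charpoly =
      ∏ i, (X ^ 2 - C (d i) * X - 1) := by
  rw [charpoly, charmatrix_fromBlocks, charmatrix_diagonal, charmatrix_zero, ← diagonal_one]
  simp only [diagonal_map, map_one, map_zero, diagonal_neg, scalar_apply]
  rw [det_fromBlocks_diagonal]
  congr! 1 with i
  ring

theorem charpoly_fromBlocks_one_one_zero_of_isHermitian {𝕜 : Type*} [RCLike 𝕜]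
    {B : Matrix ι ι 𝕜} (hB : B.IsHermitian) :
    (fromBlocks B 1 1 (0 : Matrix ι ι 𝕜)).charpoly =
      ∏ i, (X ^ 2 - C (hB.eigenvalues i : 𝕜) * X - 1) := by
  set D : Matrix ι ι 𝕜 := diagonal (RCLike.ofReal ∘ hB.eigenvalues)
  set U : Matrix ι ι 𝕜 := ↑hB.eigenvectorUnitary
  have hUU : star U * U = 1 := Unitary.star_mul_self_of_mem hB.eigenvectorUnitary.2
  have hUU' : U * star U = 1 := Unitary.mul_star_self_of_mem hB.eigenvectorUnitary.2
  set V : Matrix (ι ⊕ ι) (ι ⊕ ι) 𝕜 := fromBlocks U 0 0 U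
  have hV : star V = fromBlocks (star U) 0 0 (star U) := by
    simp [V, star_eq_conjTranspose, fromBlocks_conjTranspose]
  have hconj : fromBlocks B 1 1 (0 : Matrix ι ι 𝕜) = V * fromBlocks D 1 1 0 * star V := by
    have hBU : B = U * D * star U := hB.spectral_theorem
    rw [hBU, hV, fromBlocks_multiply, fromBlocks_multiply]
    simp [mul_assoc, hUU']
  have hVV : star V * V = 1 := by simp [hV, V, fromBlocks_multiply, hUU]
  rw [hconj, charpoly_mul_comm, ← mul_assoc, hVV, one_mul,
    charpoly_fromBlocks_diagonal_one_one_zero]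
  rfl

theorem IsHermitian.card_eigenvalues_eq_countP_roots {A : Matrix ι ι ℝ} (hA : A.IsHermitian)
    (P : ℝ → Prop) [DecidablePred P] :
    Nat.card {i // P (hA.eigenvalues i)} = A.charpoly.roots.countP P := by
  rw [hA.roots_charpoly_eq_eigenvalues, Multiset.countP_map, Nat.card_eq_fintype_card,
    Fintype.card_subtype]
  simp [Finset.card_def, Finset.filter_val]

theorem IsHermitian.card_eigenvalues_pos_neg_of_charpoly_eq {κ : Type*} [Fintype κ]
    {A : Matrix ι ι ℝ} (hA : A.IsHermitian) {p q : κ → ℝ} (hp : ∀ k, 0 < p k) (hq : ∀ k, q k < 0)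
    (h : A.charpoly = ∏ k, (X - C (p k)) * (X - C (q k))) :
    Nat.card {i // 0 < hA.eigenvalues i} = Fintype.card κ ∧
      Nat.card {i // hA.eigenvalues i < 0} = Fintype.card κ := by
  rw [hA.card_eigenvalues_eq_countP_roots (0 < ·), hA.card_eigenvalues_eq_countP_roots (· < 0),
    h, roots_prod_X_sub_C_mul_X_sub_C, Multiset.countP_add, Multiset.countP_add]
  simp [Multiset.countP_map, hp, hq, (hp _).not_gt, (hq _).not_gt]

end Matrix

theorem corona_adjMatrix {R : Type*} [Zero R] [One R] {n : ℕ} (H : SimpleGraph (Fin n)) :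
    (corona H).adjMatrix R = fromBlocks (H.adjMatrix R) 1 1 0 := by
  -- `congr` reconciles the classical decidability instances with `instDecidableEqFin`
  ext (i | i) (j | j) <;> simp only [SimpleGraph.adjMatrix_apply] <;> simp [corona, one_apply] <;>
    congr

/-- The spectrum of every (unsigned, simple) corona graph splits about the
origin: if `G` is the corona of a graph `H` on `n` vertices, then `G` has `2n` vertices,
`n` of its adjacency eigenvalues are positive and `n` are negative. -/
theorem corona_spectrum_splits
    {n : ℕ} (H : SimpleGraph (Fin n))
    (A : Matrix (Fin n ⊕ Fin n) (Fin n ⊕ Fin n) ℝ)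
    (hAdef : A = Matrix.of fun x y => if (corona H).Adj x y then (1 : ℝ) else 0)
    (hA : A.IsHermitian) :
    Nat.card {x // 0 < hA.eigenvalues x} = n ∧
    Nat.card {x // hA.eigenvalues x < 0} = n := by
  have hB := H.isHermitian_adjMatrix ℝ
  choose p q hp hq hpq using
    fun i => exists_pos_neg_factorization_X_sq_sub (hB.eigenvalues i) one_pos
  have hchar : A.charpoly = ∏ i, (X - C (p i)) * (X - C (q i)) := by
    rw [hAdef, ← SimpleGraph.adjMatrix, corona_adjMatrix,
      charpoly_fromBlocks_one_one_zero_of_isHermitian hB]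
    simpa using Finset.prod_congr rfl fun i _ => hpq i
  simpa using hA.card_eigenvalues_pos_neg_of_charpoly_eq hp hq hchar
end
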